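/- arXiv:math/0604036 — 9 statements merged into one kernel-verified Lean document; each statement's English description precedes it below -/
import Mathlib

section
/- Let G = Z/mZ with m ≥ 2. A multiset ⟨a_1,...,a_{m−1}⟩ of elements of G has the property that no nonempty subset sums to zero if and only if a_1 = a_2 = ... = a_{m−1} = a for some a ∈ G with gcd(a, m) = 1. -/
lemma prefix_key (m : ℕ) [NeZero m] (hm : 2 ≤ m) (M : Multiset (ZMod m)) (hcard : M.card = m - 1)
    (hzs : ∀ S ≤ M, S ≠ 0 → S.sum ≠ 0) (L : List (ZMod m))
    (hL : (L : Multiset (ZMod m)) = M) :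
    Function.Injective (fun k : Fin (m-1) => (L.take (k+1)).sum) ∧
    Finset.image (fun k : Fin (m-1) => (L.take (k+1)).sum) Finset.univ
      = ({0}ᶜ : Finset (ZMod m)) := by
  have hlen : L.length = m - 1 := by
    have := congrArg Multiset.card hL
    simpa [hcard] using this
  have hpre : ∀ k : Fin (m-1), (L.take (k+1)).sum ≠ 0 := by
    intro k
    apply hzs (↑(L.take (k+1)))
    · rw [← hL]
      exact (L.take_sublist _).subperm
    · have h1 : (L.take (k+1)).length = k+1 := by
        rw [List.length_take]; omega
      intro h
      rw [Multiset.coe_eq_zero] at h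
      simp [h] at h1
  have hinjlt : ∀ i j : Fin (m-1), i < j →
      (L.take (i+1)).sum ≠ (L.take (j+1)).sum := by
    intro i j hij heq
    set seg := (L.drop (i+1)).take ((j:ℕ) - i) with hseg
    have hsplit : L.take ((j:ℕ)+1) = L.take ((i:ℕ)+1) ++ seg := by
      have h2 : (j:ℕ)+1 = ((i:ℕ)+1) + ((j:ℕ) - i) := by
        have : (i:ℕ) < j := hij
        omega
      rw [h2, List.take_add]
    have hsum : seg.sum = 0 := by
      have h3 := congrArg List.sum hsplit
      rw [List.sum_append, ← heq] at h3
      exact (left_eq_add.mp h3)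
    have hlseg : seg.length = (j:ℕ) - i := by
      rw [hseg]
      rw [List.length_take, List.length_drop, hlen]
      have : (i:ℕ) < j := hij
      have := j.2
      omega
    have hle : (↑seg : Multiset (ZMod m)) ≤ M := by
      rw [← hL]
      exact (((L.drop ((i:ℕ)+1)).take_sublist _).trans (L.drop_sublist _)).subperm
    have hne : (↑seg : Multiset (ZMod m)) ≠ 0 := by
      intro h
      rw [Multiset.coe_eq_zero] at h
      rw [h] at hlseg
      have : (i:ℕ) < j := hij
      simp at hlseg
      omega
    exact hzs _ hle hne (by simpa using hsum)
  have hinj : Function.Injective (fun k : Fin (m-1) => (L.take (k+1)).sum) := by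
    intro i j h
    rcases lt_trichotomy i j with hlt | he | hgt
    · exact absurd h (hinjlt i j hlt)
    · exact he
    · exact absurd h.symm (hinjlt j i hgt)
  refine ⟨hinj, ?_⟩
  apply Finset.eq_of_subset_of_card_le
  · intro x hx
    simp only [Finset.mem_image] at hx
    obtain ⟨k, -, hk⟩ := hx
    simp only [Finset.mem_compl, Finset.mem_singleton]
    rw [← hk]; exact hpre k
  · rw [Finset.card_image_of_injective _ hinj, Finset.card_compl]
    simp [ZMod.card]

/-- In ℤ/mℤ (m ≥ 2), a multiset of m − 1 elements has no nonempty sub-multiset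
summing to zero iff it consists of m − 1 copies of a single unit a. -/
theorem stmt_1 (m : ℕ) (hm : 2 ≤ m) (M : Multiset (ZMod m)) (hcard : M.card = m - 1) :
    (∀ S ≤ M, S ≠ 0 → S.sum ≠ 0) ↔
      ∃ a : ZMod m, IsUnit a ∧ M = Multiset.replicate (m - 1) a := by
  haveI : NeZero m := ⟨by omega⟩
  constructor
  · intro hzs
    have hM0 : M ≠ 0 := by
      intro h; rw [h] at hcard; simp at hcard; omega
    obtain ⟨a, ha⟩ := Multiset.exists_mem_of_ne_zero hM0
    have hall : ∀ b ∈ M, b = a := by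
      intro b hb
      by_contra hne
      have hb' : b ∈ M.erase a := (Multiset.mem_erase_of_ne hne).2 hb
      set T := ((M.erase a).erase b).toList with hT
      have hTc : (↑T : Multiset (ZMod m)) = (M.erase a).erase b :=
        Multiset.coe_toList _
      have hL1 : ((a :: b :: T : List (ZMod m)) : Multiset (ZMod m)) = M := by
        rw [show ((a :: b :: T : List (ZMod m)) : Multiset (ZMod m))
            = a ::ₘ b ::ₘ (↑T : Multiset (ZMod m)) from rfl, hTc,
          Multiset.cons_erase hb', Multiset.cons_erase ha]
      have hL2 : ((b :: a :: T : List (ZMod m)) : Multiset (ZMod m)) = M := by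
        rw [show ((b :: a :: T : List (ZMod m)) : Multiset (ZMod m))
            = b ::ₘ a ::ₘ (↑T : Multiset (ZMod m)) from rfl, hTc,
          Multiset.cons_swap, Multiset.cons_erase hb', Multiset.cons_erase ha]
      obtain ⟨inj1, img1⟩ := prefix_key m hm M hcard hzs _ hL1
      obtain ⟨inj2, img2⟩ := prefix_key m hm M hcard hzs _ hL2
      have hpos : 0 < m - 1 := by omega
      have ha0 : ((a :: b :: T).take (((⟨0, hpos⟩ : Fin (m-1)) : ℕ) + 1)).sum = a := by
        simp
      have hmem : a ∈ Finset.image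
          (fun k : Fin (m-1) => ((b :: a :: T).take ((k:ℕ)+1)).sum) Finset.univ := by
        rw [img2, ← img1]
        exact Finset.mem_image.mpr ⟨⟨0, hpos⟩, Finset.mem_univ _, ha0⟩
      obtain ⟨k, -, hk⟩ := Finset.mem_image.mp hmem
      rcases Nat.eq_zero_or_pos (k : ℕ) with hk0 | hk1
      · have hb0 : ((b :: a :: T).take ((k:ℕ)+1)).sum = b := by
          rw [hk0]; simp
        exact hne (hb0.symm.trans hk)
      · have hsame : ((a :: b :: T).take ((k:ℕ)+1)).sum
            = ((b :: a :: T).take ((k:ℕ)+1)).sum := by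
          obtain ⟨k', hk'⟩ : ∃ k', (k:ℕ) = k' + 1 := ⟨(k:ℕ) - 1, by omega⟩
          rw [hk']
          simp only [List.take_succ_cons, List.sum_cons]
          ring
        have heq : ((a :: b :: T).take ((k:ℕ)+1)).sum
            = ((a :: b :: T).take (((⟨0, hpos⟩ : Fin (m-1)) : ℕ)+1)).sum := by
          rw [hsame, hk, ha0]
        have h0 := inj1 heq
        rw [h0] at hk1
        simp at hk1
    refine ⟨a, ?_, Multiset.eq_replicate.2 ⟨hcard, hall⟩⟩
    have hrep : M = Multiset.replicate (m-1) a := Multiset.eq_replicate.2 ⟨hcard, hall⟩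
    by_contra hu
    have hco : ¬ (a.val).Coprime m := fun h =>
      hu (by simpa [ZMod.natCast_val, ZMod.cast_id] using (ZMod.isUnit_iff_coprime a.val m).2 h)
    set g := Nat.gcd a.val m with hg
    have hgpos : 0 < g := Nat.gcd_pos_of_pos_right _ (by omega)
    have hgm : g ∣ m := Nat.gcd_dvd_right _ _
    have hga : g ∣ a.val := Nat.gcd_dvd_left _ _
    have hg2 : 2 ≤ g := by
      have hgne : g ≠ 1 := fun h => hco h
      omega
    set d := m / g with hd
    have hd1 : 1 ≤ d := Nat.one_le_div_iff hgpos |>.2 (Nat.le_of_dvd (by omega) hgm)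
    have hd2 : d ≤ m - 1 := by
      have := Nat.div_lt_self (show 0 < m by omega) hg2
      omega
    have hle : Multiset.replicate d a ≤ M := by
      rw [hrep]
      exact Multiset.replicate_le_replicate a |>.2 hd2
    have hne : Multiset.replicate d a ≠ 0 := by
      intro h
      have := congrArg Multiset.card h
      simp at this
      omega
    have hdvd : m ∣ d * a.val := by
      obtain ⟨t, ht⟩ := hga
      refine ⟨t, ?_⟩
      have hdg : d * g = m := Nat.div_mul_cancel hgm
      rw [ht, ← mul_assoc, hdg]
    have hsum : (Multiset.replicate d a).sum = 0 := by
      rw [Multiset.sum_replicate, nsmul_eq_mul]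
      have h1 : ((d * a.val : ℕ) : ZMod m) = 0 := (ZMod.natCast_eq_zero_iff _ _).2 hdvd
      push_cast at h1
      rwa [ZMod.natCast_val, ZMod.cast_id] at h1
    exact hzs _ hle hne hsum
  · rintro ⟨a, hu, rfl⟩ S hS hS0
    have hSa : ∀ x ∈ S, x = a := fun x hx =>
      Multiset.eq_of_mem_replicate (Multiset.mem_of_le hS hx)
    have hSrep : S = Multiset.replicate S.card a := Multiset.eq_replicate_card.2 hSa
    have hc1 : 0 < S.card := Multiset.card_pos.2 hS0
    have hc2 : S.card ≤ m - 1 := by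
      have := Multiset.card_le_card hS
      simpa using this
    intro hsum
    rw [hSrep, Multiset.sum_replicate, nsmul_eq_mul] at hsum
    have hcz : ((S.card : ℕ) : ZMod m) = 0 := (IsUnit.mul_left_eq_zero hu).mp hsum
    rw [ZMod.natCast_eq_zero_iff] at hcz
    have := Nat.le_of_dvd (by omega) hcz
    omega
end

section
/- Let p be a prime, r ≥ 1, and G_r = Z/p^r Z. Let a ∈ G_r be nonzero with p^{r−1} dividing a (i.e., a generates the unique subgroup of order p). If ⟨a_1,...,a_k⟩ is a multiset of nonzero elements of G_r such that no subset (including the empty set) sums to a, then for every such multiset the set of subset sums {∑_{j∈S} a_j : S ⊆ {1,...,k}} has at least k+1 elements. -/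
/-!
Adjoin the elements of the multiset one at a time. If adjoining `x` does not enlarge the set of
subset sums, that set contains `0` and is closed under `x + ·`, so it contains every multiple of
`x`. In `ZMod (p ^ r)` every nonzero `x` divides `p ^ (r - 1)`, so `a` is such a multiple and
would be a subset sum. Hence each of the `k` steps adds a new sum to the initial `{0}`.
-/

namespace Multiset

variable {G : Type*} [AddCommMonoid G]

def subsetSums (M : Multiset G) : Set G := {g | ∃ S ≤ M, S.sum = g}

theorem subsetSums_finite (M : Multiset G) : (subsetSums M).Finite :=
  (M.powerset.finite_toSet.image Multiset.sum).subset fun _ ⟨S, hS, hSg⟩ =>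
    ⟨S, mem_powerset.2 hS, hSg⟩

theorem zero_mem_subsetSums (M : Multiset G) : (0 : G) ∈ subsetSums M :=
  ⟨0, zero_le M, sum_zero⟩

theorem subsetSums_mono {M N : Multiset G} (h : M ≤ N) : subsetSums M ⊆ subsetSums N :=
  fun _ ⟨S, hS, hSg⟩ => ⟨S, hS.trans h, hSg⟩

theorem add_mem_subsetSums_cons {M : Multiset G} {g : G} (x : G) (hg : g ∈ subsetSums M) :
    x + g ∈ subsetSums (x ::ₘ M) := by
  obtain ⟨S, hS, rfl⟩ := hg
  exact ⟨x ::ₘ S, cons_le_cons x hS, sum_cons x S⟩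

theorem multiples_subset_subsetSums {M : Multiset G} {x : G}
    (h : subsetSums (x ::ₘ M) ⊆ subsetSums M) :
    (AddSubmonoid.multiples x : Set G) ⊆ subsetSums M := by
  rintro _ ⟨n, rfl⟩
  induction n with
  | zero => simpa using zero_mem_subsetSums M
  | succ n ih => simpa [succ_nsmul'] using h (add_mem_subsetSums_cons x ih)

theorem card_add_one_le_ncard_subsetSums {M : Multiset G} {a : G}
    (hmul : ∀ x ∈ M, a ∈ AddSubmonoid.multiples x) (havoid : ∀ S ≤ M, S.sum ≠ a) :
    card M + 1 ≤ (subsetSums M).ncard := by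
  induction M using Multiset.induction with
  | empty =>
    rw [card_zero, zero_add]
    exact (Set.ncard_pos (subsetSums_finite 0)).2 ⟨0, zero_mem_subsetSums 0⟩
  | cons x T ih =>
    have hgrow : subsetSums T ⊂ subsetSums (x ::ₘ T) := by
      refine (subsetSums_mono (le_cons_self T x)).ssubset_of_not_subset fun hsub => ?_
      obtain ⟨S, hS, hSa⟩ := multiples_subset_subsetSums hsub (hmul x (mem_cons_self x T))
      exact havoid S (hS.trans (le_cons_self T x)) hSa
    have hT : card T + 1 ≤ (subsetSums T).ncard :=
      ih (fun y hy => hmul y (mem_cons_of_mem hy))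
        (fun S hS => havoid S (hS.trans (le_cons_self T x)))
    have hlt := Set.ncard_lt_ncard hgrow (subsetSums_finite _)
    rw [card_cons]
    omega

end Multiset

namespace ZMod

theorem dvd_prime_pow_pred {p r : ℕ} (hp : p.Prime) {x : ZMod (p ^ r)} (hx : x ≠ 0) :
    x ∣ (p : ZMod (p ^ r)) ^ (r - 1) := by
  have : NeZero (p ^ r) := ⟨pow_ne_zero r hp.ne_zero⟩
  obtain ⟨s, hsr, hs⟩ := (Nat.dvd_prime_pow hp).1 (Nat.gcd_dvd_right x.val (p ^ r))
  have hs_ne : s ≠ r := by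
    rintro rfl
    have hdvd : p ^ s ∣ x.val := hs.symm.dvd.trans (Nat.gcd_dvd_left _ _)
    exact hx ((val_eq_zero x).1 (Nat.eq_zero_of_dvd_of_lt hdvd (val_lt x)))
  have hgcd : x ∣ (p : ZMod (p ^ r)) ^ s := ⟨x⁻¹, by rw [mul_inv_eq_gcd, hs, Nat.cast_pow]⟩
  exact hgcd.trans (pow_dvd_pow _ (by omega))

theorem mem_multiples_of_dvd {n : ℕ} [NeZero n] {x a : ZMod n} (h : x ∣ a) :
    a ∈ AddSubmonoid.multiples x := by
  obtain ⟨c, rfl⟩ := h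
  exact ⟨c.val, by simp only [nsmul_eq_mul, natCast_zmod_val]; exact mul_comm _ _⟩

end ZMod

theorem stmt_2_general (p : ℕ) (hp : p.Prime) (r : ℕ)
    (a : ZMod (p ^ r)) (hdvd : ∃ b : ZMod (p ^ r), a = (p : ZMod (p ^ r)) ^ (r - 1) * b)
    (M : Multiset (ZMod (p ^ r))) (hM0 : ∀ x ∈ M, x ≠ 0)
    (havoid : ∀ S ≤ M, S.sum ≠ a) :
    M.card + 1 ≤ {g : ZMod (p ^ r) | ∃ S ≤ M, S.sum = g}.ncard := by
  have : NeZero (p ^ r) := ⟨pow_ne_zero r hp.ne_zero⟩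
  obtain ⟨b, rfl⟩ := hdvd
  refine Multiset.card_add_one_le_ncard_subsetSums (fun x hx => ?_) havoid
  exact ZMod.mem_multiples_of_dvd ((ZMod.dvd_prime_pow_pred hp (hM0 x hx)).mul_right b)

/-- If a ∈ ℤ/p^rℤ is nonzero with p^(r−1) ∣ a, and ⟨a₁,…,a_k⟩ is a multiset of
nonzero elements no sub-multiset of which sums to a, then the set of sub-multiset
sums has at least k + 1 elements. -/
theorem stmt_2 (p : ℕ) (hp : p.Prime) (r : ℕ) (hr : 1 ≤ r)
    (a : ZMod (p ^ r)) (ha : a ≠ 0) (hdvd : ∃ b : ZMod (p ^ r), a = (p : ZMod (p ^ r)) ^ (r - 1) * b)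
    (M : Multiset (ZMod (p ^ r))) (hM0 : ∀ x ∈ M, x ≠ 0)
    (havoid : ∀ S ≤ M, S.sum ≠ a) :
    M.card + 1 ≤ {g : ZMod (p ^ r) | ∃ S ≤ M, S.sum = g}.ncard :=
  stmt_2_general p hp r a hdvd M hM0 havoid
end

section
/- Let p be a prime, r ≥ 1, G_r = Z/p^r Z, and let a ∈ G_r be nonzero with p^{r−1} | a. Then the largest k for which there exists a multiset of k nonzero elements of G_r no subset of which sums to a is exactly p^r − 2. -/
open Multiset in
/-- The finset of subset sums of a multiset. -/
private def msums {G : Type*} [AddCommMonoid G] [DecidableEq G] (M : Multiset G) : Finset G :=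
  (M.powerset.map Multiset.sum).toFinset

private lemma mem_msums {G : Type*} [AddCommMonoid G] [DecidableEq G] (M : Multiset G) (x : G) :
    x ∈ msums M ↔ ∃ S ≤ M, S.sum = x := by
  simp [msums, Multiset.mem_toFinset, Multiset.mem_map, Multiset.mem_powerset]

private lemma msums_cons {G : Type*} [AddCommMonoid G] [DecidableEq G] (c : G) (s : Multiset G) :
    msums (c ::ₘ s) = msums s ∪ (msums s).image (· + c) := by
  ext x
  simp only [msums, Multiset.powerset_cons, Multiset.map_add, Multiset.map_map,
    Multiset.toFinset_add, Finset.mem_union, Multiset.mem_toFinset, Multiset.mem_map,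
    Function.comp, Multiset.sum_cons, Finset.mem_image, Multiset.mem_powerset]
  constructor
  · rintro (⟨t, ht, rfl⟩ | ⟨t, ht, rfl⟩)
    · exact Or.inl ⟨t, ht, rfl⟩
    · exact Or.inr ⟨t.sum, ⟨t, ht, rfl⟩, (add_comm _ _)⟩
  · rintro (⟨t, ht, rfl⟩ | ⟨y, ⟨t, ht, rfl⟩, rfl⟩)
    · exact Or.inl ⟨t, ht, rfl⟩
    · exact Or.inr ⟨t, ht, (add_comm _ _)⟩

/-- Every nonzero element of `ZMod (p^r)` divides `p^(r-1)`. -/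
private lemma dvd_p_pow (p : ℕ) (hp : p.Prime) (r : ℕ) (hr : 1 ≤ r)
    (c : ZMod (p ^ r)) (hc : c ≠ 0) : c ∣ (p : ZMod (p ^ r)) ^ (r - 1) := by
  haveI : NeZero (p ^ r) := ⟨pow_ne_zero r hp.ne_zero⟩
  set v := c.val with hv
  have hv0 : v ≠ 0 := fun h => hc ((ZMod.val_eq_zero c).mp h)
  have hvlt : v < p ^ r := ZMod.val_lt c
  set t := v.factorization p with htdef
  have hdvd : p ^ t ∣ v := Nat.ordProj_dvd v p
  have hndvd : ¬ p ∣ (v / p ^ t) := Nat.not_dvd_ordCompl hp hv0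
  have hvu : v = p ^ t * (v / p ^ t) := (Nat.ordProj_mul_ordCompl_eq_self v p).symm
  set u := v / p ^ t with hu
  have htr : t ≤ r - 1 := by
    by_contra h
    have : r ≤ t := by omega
    have : p ^ r ∣ v := dvd_trans (pow_dvd_pow p this) hdvd
    have := Nat.le_of_dvd (Nat.pos_of_ne_zero hv0) this
    omega
  have hcop : Nat.Coprime u (p ^ r) :=
    Nat.Coprime.pow_right r ((hp.coprime_iff_not_dvd.mpr hndvd).symm)
  have hunit : IsUnit ((u : ℕ) : ZMod (p ^ r)) := (ZMod.isUnit_iff_coprime u (p ^ r)).mpr hcop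
  obtain ⟨w, hw⟩ := hunit.exists_right_inv
  refine ⟨w * (p : ZMod (p ^ r)) ^ (r - 1 - t), ?_⟩
  have hc' : c = (p : ZMod (p ^ r)) ^ t * (u : ZMod (p ^ r)) := by
    rw [← ZMod.natCast_zmod_val c, ← hv]
    conv_lhs => rw [hvu]
    push_cast
    ring
  rw [hc']
  symm
  calc (p : ZMod (p ^ r)) ^ t * (u : ZMod (p ^ r)) * (w * (p : ZMod (p ^ r)) ^ (r - 1 - t))
      = (p : ZMod (p ^ r)) ^ t * (p : ZMod (p ^ r)) ^ (r - 1 - t) * ((u : ZMod (p ^ r)) * w) := by ring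
    _ = (p : ZMod (p ^ r)) ^ (r - 1) := by
        rw [hw, mul_one, ← pow_add]
        congr 1
        omega

/-- Growth lemma: if no subset of `M` sums to `a`, and `a` is a multiple of every nonzero
element, then the subset sums of `M` have at least `M.card + 1` elements. -/
private lemma card_msums {n : ℕ} [NeZero n] (a : ZMod n)
    (hka : ∀ c : ZMod n, c ≠ 0 → ∃ x : ZMod n, a = x * c) :
    ∀ M : Multiset (ZMod n), (∀ x ∈ M, x ≠ 0) → (∀ S ≤ M, S.sum ≠ a) →
      M.card + 1 ≤ (msums M).card := by
  intro M
  induction M using Multiset.induction_on with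
  | empty => intro _ _; simp [msums]
  | cons c s ih =>
    intro h0 hS
    have hc0 : c ≠ 0 := h0 c (Multiset.mem_cons_self c s)
    have h0' : ∀ x ∈ s, x ≠ 0 := fun x hx => h0 x (Multiset.mem_cons_of_mem hx)
    have hS' : ∀ S ≤ s, S.sum ≠ a := fun S hle => hS S (le_trans hle (Multiset.le_cons_self s c))
    have hA := ih h0' hS'
    by_cases himg : (msums s).image (· + c) = msums s
    · -- then msums s is closed under + c, contains 0, hence contains a : contradiction
      exfalso
      have h0mem : (0 : ZMod n) ∈ msums s := by
        rw [mem_msums]; exact ⟨0, Multiset.zero_le s, rfl⟩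
      have hclosed : ∀ x ∈ msums s, x + c ∈ msums s := by
        intro x hx
        rw [← himg]
        exact Finset.mem_image_of_mem _ hx
      have hmul : ∀ k : ℕ, k • c ∈ msums s := by
        intro k
        induction k with
        | zero => simpa using h0mem
        | succ k ihk => rw [succ_nsmul]; exact hclosed _ ihk
      obtain ⟨x, hx⟩ := hka c hc0
      have : a ∈ msums s := by
        have : a = x.val • c := by
          rw [nsmul_eq_mul, ZMod.natCast_zmod_val, hx]
        rw [this]; exact hmul x.val
      rw [mem_msums] at this
      obtain ⟨S, hle, hsum⟩ := this
      exact hS' S hle hsum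
    · rw [msums_cons]
      have hsub : msums s ⊆ msums s ∪ (msums s).image (· + c) := Finset.subset_union_left
      have hcardim : ((msums s).image (· + c)).card = (msums s).card :=
        Finset.card_image_of_injective _ (add_left_injective c)
      have hne : msums s ∪ (msums s).image (· + c) ≠ msums s := by
        intro h
        apply himg
        have him_sub : (msums s).image (· + c) ⊆ msums s := by
          have h2 : (msums s).image (· + c) ⊆ msums s ∪ (msums s).image (· + c) :=
            Finset.subset_union_right
          rwa [h] at h2
        exact Finset.eq_of_subset_of_card_le him_sub (le_of_eq hcardim.symm)
      have : (msums s).card < (msums s ∪ (msums s).image (· + c)).card :=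
        Finset.card_lt_card (Finset.ssubset_iff_subset_ne.mpr ⟨hsub, Ne.symm hne⟩)
      simp only [Multiset.card_cons]
      omega

/-- κ(ℤ/p^rℤ, a) = p^r − 2 when a ≠ 0 and p^(r−1) ∣ a. -/
theorem stmt_3 (p : ℕ) (hp : p.Prime) (r : ℕ) (hr : 1 ≤ r)
    (a : ZMod (p ^ r)) (ha : a ≠ 0)
    (hdvd : ∃ b : ZMod (p ^ r), a = (p : ZMod (p ^ r)) ^ (r - 1) * b) :
    IsGreatest {k : ℕ | ∃ M : Multiset (ZMod (p ^ r)), M.card = k ∧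
      (∀ x ∈ M, x ≠ 0) ∧ ∀ S ≤ M, S.sum ≠ a} (p ^ r - 2) := by
  haveI : NeZero (p ^ r) := ⟨pow_ne_zero r hp.ne_zero⟩
  have hp2 : 2 ≤ p := hp.two_le
  have hm1 : 1 ≤ p ^ (r - 1) := Nat.one_le_pow _ _ hp.pos
  have hmn : p ^ (r - 1) < p ^ r := Nat.pow_lt_pow_right hp.one_lt (by omega)
  have h2m : 2 * p ^ (r - 1) ≤ p ^ r := by
    calc 2 * p ^ (r - 1) ≤ p * p ^ (r - 1) := Nat.mul_le_mul_right _ hp2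
      _ = p ^ r := by rw [← pow_succ']; congr 1; omega
  have hn2 : 2 ≤ p ^ r := by omega
  obtain ⟨b, hb⟩ := hdvd
  -- b is a unit
  have hbu : IsUnit b := by
    by_contra hnb
    apply ha
    have hpb : p ∣ b.val := by
      by_contra hpb
      exact hnb (by
        rw [← ZMod.natCast_zmod_val b, ZMod.isUnit_iff_coprime]
        exact Nat.Coprime.pow_right r ((hp.coprime_iff_not_dvd.mpr hpb).symm))
    obtain ⟨t, ht⟩ := hpb
    have hbt : b = ((p * t : ℕ) : ZMod (p ^ r)) := by rw [← ht, ZMod.natCast_zmod_val b]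
    rw [hb, hbt]
    push_cast
    rw [← mul_assoc, ← pow_succ]
    have hre : r - 1 + 1 = r := by omega
    rw [hre, ← Nat.cast_pow, ZMod.natCast_self, zero_mul]
  haveI : Fact (1 < p ^ r) := ⟨by omega⟩
  have hb0 : b ≠ 0 := hbu.ne_zero
  constructor
  · -- membership: explicit multiset
    refine ⟨Multiset.replicate (p ^ (r - 1) - 1) b +
      Multiset.replicate (p ^ r - p ^ (r - 1) - 1) (-b), ?_, ?_, ?_⟩
    · simp only [Multiset.card_add, Multiset.card_replicate]; omega
    · intro x hx
      rw [Multiset.mem_add, Multiset.mem_replicate, Multiset.mem_replicate] at hx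
      rcases hx with ⟨_, h⟩ | ⟨_, h⟩
      · rw [h]; exact hb0
      · rw [h]; exact neg_ne_zero.mpr hb0
    · intro S hle hsum
      have hmem : ∀ x ∈ S, x = b ∨ x = -b := by
        intro x hx
        have := Multiset.mem_of_le hle hx
        rw [Multiset.mem_add, Multiset.mem_replicate, Multiset.mem_replicate] at this
        tauto
      have hfilter : S.filter (· = b) = Multiset.replicate (S.count b) b :=
        Multiset.filter_eq' S b
      have hsplit : S = Multiset.replicate (S.count b) b + S.filter (¬ · = b) := by
        rw [← hfilter]; exact (Multiset.filter_add_not _ S).symm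
      by_cases hbnb : b = -b
      · -- degenerate case: p ^ r = 2 and the multiset is empty
        exfalso
        have hbb : b + b = 0 := by nth_rewrite 2 [hbnb]; ring
        have h2 : ((2 : ℕ) : ZMod (p ^ r)) = 0 := by
          obtain ⟨w, hw⟩ := hbu.exists_right_inv
          calc ((2 : ℕ) : ZMod (p ^ r)) = b * w + b * w := by rw [hw]; push_cast; ring
            _ = (b + b) * w := by ring
            _ = 0 := by rw [hbb, zero_mul]
        rw [ZMod.natCast_eq_zero_iff] at h2
        have hn2' : p ^ r = 2 := le_antisymm (Nat.le_of_dvd (by norm_num) h2) hn2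
        have hS0 : S = 0 := by
          have h1 : p ^ (r - 1) - 1 = 0 := by omega
          have h2' : p ^ r - p ^ (r - 1) - 1 = 0 := by omega
          rw [h1, h2'] at hle
          simp only [Multiset.replicate_zero, add_zero] at hle
          exact Multiset.le_zero.mp hle
        rw [hS0] at hsum
        simp only [Multiset.sum_zero] at hsum
        exact ha hsum.symm
      · -- T consists of copies of -b
        have hT : S.filter (¬ · = b) =
            Multiset.replicate (Multiset.card (S.filter (¬ · = b))) (-b) := by
          rw [Multiset.eq_replicate_card]
          intro x hx
          have hxS : x ∈ S := Multiset.mem_of_mem_filter hx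
          rcases hmem x hxS with rfl | rfl
          · exfalso
            have := Multiset.of_mem_filter hx
            simp at this
          · rfl
        set i := S.count b with hidef
        set j := Multiset.card (S.filter (¬ · = b)) with hjdef
        have hiM : i ≤ p ^ (r - 1) - 1 := by
          have := Multiset.count_le_of_le b hle
          rw [Multiset.count_add, Multiset.count_replicate, Multiset.count_replicate] at this
          rw [if_pos rfl, if_neg (fun h => hbnb h.symm)] at this
          omega
        have hjM : j ≤ p ^ r - p ^ (r - 1) - 1 := by
          have hcnt := Multiset.count_le_of_le (-b) hle
          rw [Multiset.count_add, Multiset.count_replicate, Multiset.count_replicate] at hcnt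
          have hcount : S.count (-b) = j := by
            rw [hsplit, Multiset.count_add, Multiset.count_replicate, hT,
              Multiset.count_replicate]
            rw [if_neg hbnb, if_pos rfl, zero_add]
          rw [hcount] at hcnt
          rw [if_neg hbnb, if_pos rfl] at hcnt
          omega
        have hsum' : S.sum = ((i : ZMod (p ^ r)) - (j : ZMod (p ^ r))) * b := by
          conv_lhs => rw [hsplit]
          rw [Multiset.sum_add, hT, Multiset.sum_replicate, Multiset.sum_replicate,
            nsmul_eq_mul, nsmul_eq_mul]
          ring
        rw [hsum', hb] at hsum
        have hcancel : (i : ZMod (p ^ r)) - (j : ZMod (p ^ r)) = (p : ZMod (p ^ r)) ^ (r - 1) := by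
          obtain ⟨w, hw⟩ := hbu.exists_right_inv
          calc (i : ZMod (p ^ r)) - (j : ZMod (p ^ r))
              = ((i : ZMod (p ^ r)) - (j : ZMod (p ^ r))) * b * w := by
                rw [mul_assoc, hw, mul_one]
            _ = (p : ZMod (p ^ r)) ^ (r - 1) * b * w := by rw [hsum]
            _ = (p : ZMod (p ^ r)) ^ (r - 1) := by rw [mul_assoc, hw, mul_one]
        have hzero : ((i - j - (p ^ (r - 1) : ℕ) : ℤ) : ZMod (p ^ r)) = 0 := by
          push_cast
          rw [hcancel, sub_self]
        rw [ZMod.intCast_zmod_eq_zero_iff_dvd] at hzero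
        have hfin : (i : ℤ) - j - (p ^ (r - 1) : ℕ) = 0 := by
          apply Int.eq_zero_of_abs_lt_dvd hzero
          rw [abs_lt]
          constructor <;> omega
        omega
  · -- upper bound
    intro k hk
    obtain ⟨M, hcard, h0, hS⟩ := hk
    have hka : ∀ c : ZMod (p ^ r), c ≠ 0 → ∃ x : ZMod (p ^ r), a = x * c := by
      intro c hc
      obtain ⟨d, hd⟩ := dvd_p_pow p hp r hr c hc
      exact ⟨b * d, by rw [hb, hd]; ring⟩
    have hbound := card_msums a hka M h0 hS
    have hanot : a ∉ msums M := by
      rw [mem_msums]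
      rintro ⟨S, hle, hsum⟩
      exact hS S hle hsum
    have hsubset : msums M ⊆ Finset.univ.erase a := by
      intro x hx
      rw [Finset.mem_erase]
      exact ⟨fun h => hanot (h ▸ hx), Finset.mem_univ x⟩
    have hcard2 : (msums M).card ≤ p ^ r - 1 := by
      have := Finset.card_le_card hsubset
      rw [Finset.card_erase_of_mem (Finset.mem_univ a), Finset.card_univ, ZMod.card] at this
      exact this
    omega
end

section
/- Let p be a prime, r ≥ 1, G_r = Z/p^r Z, a ∈ G_r nonzero with p^{r−1} | a, and set k = p^r − 2. Fix b ∈ G_r with p ∤ b, and let n be the least nonnegative integer with n ≡ a·b^{−1} − 1 (mod p^r). Then the multiset consisting of n copies of b and k − n copies of −b has the property that no subset of it sums to a. -/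
/-!
Every sub-multiset sum has the form `(i - j) • b` with `0 ≤ i ≤ n` and `0 ≤ j ≤ p ^ r - 2 - n`.
The integers `i - j` then range over the `p ^ r - 1` consecutive values `-(p ^ r - 2 - n), …, n`,
which hit every residue class except that of `n + 1 = a * b⁻¹`; so no sum equals `a`.
-/

theorem Multiset.exists_sum_eq_of_le_replicate_add_replicate {M : Type*} [AddCommMonoid M]
    {S : Multiset M} {m l : ℕ} {u v : M} (hS : S ≤ replicate m u + replicate l v) :
    ∃ i ≤ m, ∃ j ≤ l, S.sum = i • u + j • v := by
  classical
  obtain ⟨i, hi, hu⟩ := le_replicate_iff.mp (inter_le_right : S ∩ replicate m u ≤ _)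
  obtain ⟨j, hj, hv⟩ := le_replicate_iff.mp
    (Multiset.sub_le_iff_le_add.mpr (hS.trans_eq (add_comm _ _)) : S - replicate m u ≤ replicate l v)
  refine ⟨i, hi, j, hj, ?_⟩
  rw [← sub_add_inter S (replicate m u), sum_add, hu, hv, sum_replicate, sum_replicate, add_comm]

theorem ZMod.val_add_two_le_of_add_one_ne_zero {N : ℕ} [NeZero N] {x : ZMod N} (hx : x + 1 ≠ 0) :
    x.val + 2 ≤ N := by
  have hlt := x.val_lt
  by_contra hle
  apply hx
  have hval : x.val + 1 = N := by omega
  rw [← ZMod.natCast_zmod_val x, ← Nat.cast_add_one, hval, ZMod.natCast_self]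

theorem ZMod.natCast_sub_natCast_ne_add_one {N i j n : ℕ} (hi : i ≤ n) (hj : n + j + 2 ≤ N) :
    (i : ZMod N) - j ≠ n + 1 := by
  intro h
  have hzero : ((n + 1 - i + j : ℕ) : ZMod N) = 0 := by
    push_cast [Nat.cast_sub (by omega : i ≤ n + 1)]
    rw [← h]
    ring
  have := Nat.eq_zero_of_dvd_of_lt ((ZMod.natCast_eq_zero_iff _ _).mp hzero) (by omega)
  omega

theorem stmt_4_general (p : ℕ) (hp : p.Prime) (r : ℕ)
    (a : ZMod (p ^ r)) (ha : a ≠ 0)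
    (b : (ZMod (p ^ r))ˣ) :
    ∀ S ≤ Multiset.replicate ((a * (↑b⁻¹ : ZMod (p ^ r)) - 1).val) (b : ZMod (p ^ r)) +
        Multiset.replicate (p ^ r - 2 - (a * (↑b⁻¹ : ZMod (p ^ r)) - 1).val)
          (-(b : ZMod (p ^ r))),
      S.sum ≠ a := by
  have : NeZero (p ^ r) := ⟨pow_ne_zero r hp.ne_zero⟩
  set n := (a * (↑b⁻¹ : ZMod (p ^ r)) - 1).val with hn
  have hn_cast : (n : ZMod (p ^ r)) + 1 = a * ↑b⁻¹ := by
    rw [hn, ZMod.natCast_zmod_val, sub_add_cancel]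
  have hn_le : n + 2 ≤ p ^ r := ZMod.val_add_two_le_of_add_one_ne_zero (by
    rwa [sub_add_cancel, Ne, Units.mul_left_eq_zero])
  intro S hS hsum
  obtain ⟨i, hi, j, hj, hS_sum⟩ := Multiset.exists_sum_eq_of_le_replicate_add_replicate hS
  apply ZMod.natCast_sub_natCast_ne_add_one (N := p ^ r) (j := j) hi (by omega)
  rw [hn_cast, ← hsum, hS_sum, smul_neg, nsmul_eq_mul, nsmul_eq_mul]
  linear_combination -(↑i - ↑j : ZMod (p ^ r)) * b.mul_inv

/-- The multiset 𝔐_{p,r,a}(b) with n copies of b and (p^r − 2 − n) copies of −b,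
where n is the least nonnegative residue of a·b⁻¹ − 1 mod p^r, avoids a. -/
theorem stmt_4 (p : ℕ) (hp : p.Prime) (r : ℕ) (hr : 1 ≤ r)
    (a : ZMod (p ^ r)) (ha : a ≠ 0)
    (hdvd : ∃ c : ZMod (p ^ r), a = (p : ZMod (p ^ r)) ^ (r - 1) * c)
    (b : (ZMod (p ^ r))ˣ) :
    ∀ S ≤ Multiset.replicate ((a * (↑b⁻¹ : ZMod (p ^ r)) - 1).val) (b : ZMod (p ^ r)) +
        Multiset.replicate (p ^ r - 2 - (a * (↑b⁻¹ : ZMod (p ^ r)) - 1).val)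
          (-(b : ZMod (p ^ r))),
      S.sum ≠ a :=
  stmt_4_general p hp r a ha b
end

section
/- Let p be a prime, k ≥ 1, and a ∈ Z/pZ nonzero. Suppose ⟨a_1,...,a_k⟩ is a multiset of nonzero elements of Z/pZ such that no subset sums to a, and suppose there exist indices i, j with a_i ≢ ±a_j (mod p). Then this leads to a contradiction; i.e., all elements of the multiset lie in {b, −b} for some fixed b ∈ Z/pZ, b ≠ 0. -/
/-!
Let `Σ(M)` be the set of subset sums of `M`. Adjoining an element `x` replaces `Σ(M)` by
`{0, x} + Σ(M)`, so by Cauchy–Davenport every nonzero element enlarges `Σ(M)` by at least one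
until it is all of `ℤ/pℤ`. Two elements `x, y` with `x ≠ ±y` contribute the four distinct sums
`0, x, y, x + y` instead of three, so a multiset of `p - 2` nonzero elements that is not contained
in some `{b, -b}` has `p` subset sums, and one of them is `a`.
-/

open Finset Pointwise

variable {G : Type*}

def Multiset.subsetSums_s6 [AddCommMonoid G] [DecidableEq G] (M : Multiset G) : Finset G :=
  (M.powerset.map Multiset.sum).toFinset

namespace Multiset

variable [AddCommMonoid G] [DecidableEq G]

theorem mem_subsetSums {M : Multiset G} {z : G} :
    z ∈ M.subsetSums_s6 ↔ ∃ S ≤ M, S.sum = z := by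
  simp [subsetSums_s6]

@[simp]
theorem subsetSums_zero : (0 : Multiset G).subsetSums_s6 = {0} := by
  simp [subsetSums_s6]

theorem subsetSums_cons (x : G) (M : Multiset G) :
    (x ::ₘ M).subsetSums_s6 = {0, x} + M.subsetSums_s6 := by
  ext z
  simp [subsetSums_s6, powerset_cons, Finset.mem_add]

theorem subsetSums_nonempty (M : Multiset G) : M.subsetSums_s6.Nonempty :=
  ⟨0, mem_subsetSums.2 ⟨0, zero_le M, sum_zero⟩⟩

end Multiset

namespace Finset

theorem pair_add_pair [AddCommMonoid G] [DecidableEq G] (x y : G) :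
    ({0, x} : Finset G) + {0, y} = {0, x, y, x + y} := by
  ext z
  simp only [mem_add, mem_insert, mem_singleton]
  aesop

theorem card_pair_add_pair [AddCommGroup G] [DecidableEq G] {x y : G} (hx : x ≠ 0)
    (hy : y ≠ 0) (hxy : x ≠ y) (hxy' : x ≠ -y) : #(({0, x} : Finset G) + {0, y}) = 4 := by
  have hsum : x + y ≠ 0 := by rwa [Ne, add_eq_zero_iff_eq_neg]
  rw [pair_add_pair, card_insert_of_notMem, card_insert_of_notMem, card_pair] <;>
    simp [hx, hy, hxy, Ne.symm hx, Ne.symm hy, Ne.symm hsum]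

end Finset

open Multiset

namespace ZMod

variable {p : ℕ}

theorem min_card_add_one_le_card_subsetSums (hp : p.Prime) {M : Multiset (ZMod p)}
    (hM : ∀ x ∈ M, x ≠ 0) : min p (M.card + 1) ≤ #M.subsetSums_s6 := by
  induction M using Multiset.induction with
  | empty => simp
  | cons x M ih =>
    have hx : x ≠ 0 := hM x (mem_cons_self x M)
    have hcd := cauchy_davenport hp (insert_nonempty 0 {x}) (subsetSums_nonempty M)
    have hM' := ih fun y hy => hM y (mem_cons_of_mem hy)
    rw [card_pair hx.symm] at hcd
    rw [subsetSums_cons, Multiset.card_cons]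
    omega

theorem min_card_add_two_le_card_subsetSums (hp : p.Prime) {M : Multiset (ZMod p)}
    (hM : ∀ x ∈ M, x ≠ 0) {x y : ZMod p} (hx : x ∈ M) (hy : y ∈ M) (hxy : x ≠ y)
    (hxy' : x ≠ -y) : min p (M.card + 2) ≤ #M.subsetSums_s6 := by
  obtain ⟨M', rfl⟩ := exists_cons_of_mem hx
  obtain ⟨N, rfl⟩ := exists_cons_of_mem ((mem_cons.1 hy).resolve_left hxy.symm)
  have hcd := cauchy_davenport hp (s := {0, x} + {0, y}) (by simp) (subsetSums_nonempty N)
  have hN := min_card_add_one_le_card_subsetSums hp fun z hz =>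
    hM z (mem_cons_of_mem (mem_cons_of_mem hz))
  rw [card_pair_add_pair (hM x (mem_cons_self _ _)) (hM y (mem_cons_of_mem (mem_cons_self _ _)))
    hxy hxy'] at hcd
  rw [subsetSums_cons, subsetSums_cons, ← add_assoc, Multiset.card_cons, Multiset.card_cons]
  omega

end ZMod

theorem stmt_6_general (p : ℕ) (hp : p.Prime) (a : ZMod p)
    (M : Multiset (ZMod p)) (hcard : M.card = p - 2)
    (hM0 : ∀ x ∈ M, x ≠ 0) (havoid : ∀ S ≤ M, S.sum ≠ a) :
    ∃ b : ZMod p, b ≠ 0 ∧ ∀ x ∈ M, x = b ∨ x = -b := by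
  have : Fact p.Prime := ⟨hp⟩
  obtain rfl | ⟨x, hx⟩ := M.empty_or_exists_mem
  · exact ⟨1, one_ne_zero, by simp⟩
  refine ⟨x, hM0 x hx, fun y hy => ?_⟩
  by_contra! hxy
  have hbound := ZMod.min_card_add_two_le_card_subsetSums hp hM0 hy hx hxy.1 hxy.2
  have huniv : M.subsetSums_s6 = univ := by
    refine eq_univ_of_card _ (le_antisymm (card_le_univ _) ?_)
    rw [ZMod.card]
    have := hp.two_le
    omega
  obtain ⟨S, hS, hSa⟩ := mem_subsetSums.1 (huniv ▸ mem_univ a)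
  exact havoid S hS hSa

/-- For a multiset of p − 2 nonzero elements of ℤ/pℤ avoiding a ≠ 0,
all elements lie in {b, −b} for some fixed nonzero b. -/
theorem stmt_6 (p : ℕ) (hp : p.Prime) (a : ZMod p) (ha : a ≠ 0)
    (M : Multiset (ZMod p)) (hcard : M.card = p - 2)
    (hM0 : ∀ x ∈ M, x ≠ 0) (havoid : ∀ S ≤ M, S.sum ≠ a) :
    ∃ b : ZMod p, b ≠ 0 ∧ ∀ x ∈ M, x = b ∨ x = -b :=
  stmt_6_general p hp a M hcard hM0 havoid
end

section
/- Let G be a nontrivial finite cyclic group and a ∈ G a non-identity element. Write |G| = ∏_{j=1}^k p_j^{α_j} and ord(a) = ∏_{j=1}^s p_j^{β_j} with β_j ≥ 1 for j ≤ s. Define 𝒫(G,a) = min_{1≤j≤s} p_j^{α_j−β_j+1}. Let H(a) be the subgroup of G of largest cardinality among subgroups not containing a (which is well-defined since subgroups of a cyclic group are determined by cardinality). Then 𝒫(G,a)·|H(a)| = |G|. -/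
open Subgroup Finset

lemma mem_iff_orderOf_dvd {G : Type*} [Group G] [Fintype G] [IsCyclic G]
    (K : Subgroup G) (a : G) : a ∈ K ↔ orderOf a ∣ Nat.card K := by
  classical
  constructor
  · intro h
    have : orderOf (⟨a, h⟩ : K) ∣ Nat.card K := orderOf_dvd_natCard _
    rwa [orderOf_mk] at this
  · intro h
    set n := Nat.card K with hn
    have hn0 : 0 < n := Nat.card_pos
    set T : Finset G := Finset.univ.filter (fun b : G => b ^ n = 1) with hTdef
    have hT : T.card ≤ n := IsCyclic.card_pow_eq_one_le hn0
    have hsub : (K : Set G).toFinset ⊆ T := by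
      intro x hx
      simp only [Set.mem_toFinset, SetLike.mem_coe] at hx
      simp only [hTdef, Finset.mem_filter, Finset.mem_univ, true_and]
      have : (⟨x, hx⟩ : K) ^ n = 1 := by
        rw [hn]; exact pow_card_eq_one'
      simpa using congrArg (Subtype.val) this
    have hcard : (K : Set G).toFinset.card = n := by
      rw [Set.toFinset_card, hn]
      simp [Nat.card_eq_fintype_card]
    have heq : (K : Set G).toFinset = T :=
      Finset.eq_of_subset_of_card_le hsub (by omega)
    have haT : a ∈ T := by
      simp only [hTdef, Finset.mem_filter, Finset.mem_univ, true_and]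
      exact orderOf_dvd_iff_pow_eq_one.mp h
    rw [← heq] at haT
    simpa using haT

/-- For a finite nontrivial cyclic group G and a ≠ 1, with
𝒫(G,a) = min over primes p ∣ ord(a) of p^(α_p − β_p + 1), and H(a) the subgroup
of maximal cardinality not containing a, one has 𝒫(G,a)·|H(a)| = |G|. -/
theorem stmt_7 {G : Type*} [Group G] [Fintype G] [IsCyclic G]
    (hG : 1 < Fintype.card G) (a : G) (ha : a ≠ 1)
    (H : Subgroup G) (haH : a ∉ H)
    (hmax : ∀ K : Subgroup G, a ∉ K → Nat.card K ≤ Nat.card H) :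
    sInf {n : ℕ | ∃ p ∈ (orderOf a).primeFactors,
        n = p ^ ((Fintype.card G).factorization p - (orderOf a).factorization p + 1)}
      * Nat.card H = Fintype.card G := by
  classical
  set N := Fintype.card G with hNdef
  set m := orderOf a with hmdef
  set S : Set ℕ := {n : ℕ | ∃ p ∈ m.primeFactors,
      n = p ^ (N.factorization p - m.factorization p + 1)} with hSdef
  have hN0 : N ≠ 0 := by omega
  have hm1 : 1 < m := by
    have h0 : 0 < m := orderOf_pos a
    have : m ≠ 1 := fun h => ha (orderOf_eq_one_iff.mp h)
    omega
  have hm0 : m ≠ 0 := by omega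
  have hmN : m ∣ N := orderOf_dvd_card
  have hfle : ∀ p, m.factorization p ≤ N.factorization p := fun p =>
    (Nat.factorization_le_iff_dvd hm0 hN0).mpr hmN p
  -- basic facts for primes of m
  have hkey : ∀ p ∈ m.primeFactors, p.Prime ∧ 1 ≤ m.factorization p := by
    intro p hp
    have hprime := Nat.prime_of_mem_primeFactors hp
    refine ⟨hprime, ?_⟩
    have := Nat.Prime.factorization_pos_of_dvd hprime hm0 (Nat.dvd_of_mem_primeFactors hp)
    omega
  have hSdvd : ∀ n ∈ S, n ∣ N ∧ 1 < n := by
    rintro n ⟨p, hp, rfl⟩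
    obtain ⟨hprime, hβ⟩ := hkey p hp
    constructor
    · rw [Nat.Prime.pow_dvd_iff_le_factorization hprime hN0]
      have := hfle p
      omega
    · exact Nat.one_lt_pow (by omega) hprime.one_lt
  have hh0 : Nat.card H ≠ 0 := Nat.card_pos.ne'
  have hhN : Nat.card H ∣ N := by
    rw [hNdef, ← Nat.card_eq_fintype_card]
    exact Subgroup.card_subgroup_dvd_card H
  -- S nonempty
  have hSne : S.Nonempty := by
    obtain ⟨p, hp⟩ := Nat.nonempty_primeFactors.mpr hm1
    exact ⟨_, p, hp, rfl⟩
  set P := sInf S with hPdef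
  obtain ⟨p, hp, hPeq⟩ : P ∈ S := Nat.sInf_mem hSne
  obtain ⟨hprime, hβ⟩ := hkey p hp
  have hPN : P ∣ N := (hSdvd P (Nat.sInf_mem hSne)).1
  -- lower bound: N ≤ P * card H
  have hlow : N ≤ P * Nat.card H := by
    obtain ⟨g, hg⟩ := IsCyclic.exists_generator (α := G)
    have hordg : orderOf g = N := by
      rw [hNdef, ← Nat.card_eq_fintype_card]
      exact orderOf_eq_card_of_forall_mem_zpowers hg
    set K := Subgroup.zpowers (g ^ P) with hKdef
    have hKcard : Nat.card K = N / P := by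
      rw [hKdef, Nat.card_zpowers, orderOf_pow, hordg, Nat.gcd_eq_right hPN]
    have hvNP : (N / P).factorization p = m.factorization p - 1 := by
      rw [Nat.factorization_div hPN, hPeq, Nat.Prime.factorization_pow hprime]
      have := hfle p
      simp only [Finsupp.tsub_apply, Finsupp.single_eq_same]
      omega
    have haK : a ∉ K := by
      rw [mem_iff_orderOf_dvd, hKcard, ← hmdef]
      intro hdvd
      have hNP0 : N / P ≠ 0 := by
        have : 0 < N / P := Nat.div_pos (Nat.le_of_dvd (by omega) hPN) (by
          have := (hSdvd P (Nat.sInf_mem hSne)).2; omega)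
        omega
      have := (Nat.factorization_le_iff_dvd hm0 hNP0).mpr hdvd p
      rw [hvNP] at this
      omega
    have := hmax K haK
    rw [hKcard] at this
    calc N = P * (N / P) := (Nat.mul_div_cancel' hPN).symm
    _ ≤ P * Nat.card H := Nat.mul_le_mul_left P this
  -- upper bound
  have hup : P * Nat.card H ≤ N := by
    have hmh : ¬ m ∣ Nat.card H := by
      rw [mem_iff_orderOf_dvd, ← hmdef] at haH
      exact haH
    have hnle : ¬ m.factorization ≤ (Nat.card H).factorization := fun h =>
      hmh ((Nat.factorization_le_iff_dvd hm0 hh0).mp h)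
    rw [Finsupp.le_def] at hnle
    push_neg at hnle
    obtain ⟨q, hq⟩ := hnle
    have hqmem : q ∈ m.primeFactors := by
      rw [← Nat.support_factorization]
      exact Finsupp.mem_support_iff.mpr (by omega)
    obtain ⟨hqprime, hβq⟩ := hkey q hqmem
    set f := N.factorization q - m.factorization q + 1 with hfdef
    have hQS : q ^ f ∈ S := ⟨q, hqmem, rfl⟩
    have hQdvd : q ^ f * Nat.card H ∣ N := by
      have hQ0 : q ^ f ≠ 0 := pow_ne_zero _ hqprime.pos.ne'
      rw [← Nat.factorization_le_iff_dvd (mul_ne_zero hQ0 hh0) hN0,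
        Nat.factorization_mul hQ0 hh0, Finsupp.le_def]
      intro r
      simp only [Finsupp.add_apply, Nat.Prime.factorization_pow hqprime,
        Finsupp.single_apply]
      have hhle := (Nat.factorization_le_iff_dvd hh0 hN0).mpr hhN r
      by_cases hr : q = r
      · subst hr
        simp only [if_pos rfl, if_true]
        have := hfle q
        omega
      · simp only [if_neg hr]
        omega
    calc P * Nat.card H ≤ q ^ f * Nat.card H :=
          Nat.mul_le_mul_right _ (Nat.sInf_le hQS)
      _ ≤ N := Nat.le_of_dvd (by omega) hQdvd
  exact le_antisymm hup hlow
end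

section
/- Let G be a finite cyclic group, a ∈ G a non-identity element, and H(a) the maximal subgroup of G not containing a. If K is any subgroup of G that is maximal with respect to not containing a, then the index [G : K] equals p^{α−β+1} for some prime p where p^α is the exact power of p dividing |G| and p^β is the exact power of p dividing ord(a), with β ≥ 1. -/
open Subgroup Finset

/-- In a finite cyclic group, membership in a subgroup is equivalent to the
element's power by the subgroup's cardinality being the identity. -/
lemma mem_iff_pow_card_eq_one {G : Type*} [Group G] [Fintype G] [IsCyclic G]
    (K : Subgroup G) (x : G) : x ∈ K ↔ x ^ Nat.card K = 1 := by
  classical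
  constructor
  · intro hx
    have h1 : (⟨x, hx⟩ : K) ^ Nat.card K = 1 := pow_card_eq_one'
    have h2 := congrArg (Subtype.val) h1
    rw [SubmonoidClass.coe_pow] at h2
    exact h2
  · intro hx
    have hpos : 0 < Nat.card K := Nat.card_pos
    set S : Finset G := Finset.univ.filter (fun b : G => b ^ Nat.card K = 1) with hS
    have hle : S.card ≤ Nat.card K := by
      have := IsCyclic.card_pow_eq_one_le (α := G) (n := Nat.card K) hpos
      convert this using 2
    have hsub : (K : Set G).toFinset ⊆ S := by
      intro y hy
      simp only [Set.mem_toFinset, SetLike.mem_coe] at hy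
      have h1 : (⟨y, hy⟩ : K) ^ Nat.card K = 1 := pow_card_eq_one'
      have h2 := congrArg (Subtype.val) h1
      rw [SubmonoidClass.coe_pow] at h2
      simp only [hS, Finset.mem_filter, Finset.mem_univ, true_and]
      exact h2
    have hcard : (K : Set G).toFinset.card = Nat.card K := by
      simp [Nat.card_eq_card_toFinset]
    have heq : (K : Set G).toFinset = S :=
      Finset.eq_of_subset_of_card_le hsub (by rw [hcard]; exact hle)
    have hxS : x ∈ S := by
      simp only [hS, Finset.mem_filter, Finset.mem_univ, true_and]
      exact hx
    have : x ∈ (K : Set G).toFinset := by rw [heq]; exact hxS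
    simpa using this

/-- A finite cyclic group has a subgroup of every order dividing the group order. -/
lemma exists_subgroup_card_eq {G : Type*} [Group G] [Fintype G] [IsCyclic G]
    {d : ℕ} (hd : d ∣ Fintype.card G) (hd0 : d ≠ 0) :
    ∃ K : Subgroup G, Nat.card K = d := by
  obtain ⟨g, hg⟩ := IsCyclic.exists_generator (α := G)
  have hog : orderOf g = Fintype.card G := by
    rw [orderOf_eq_card_of_forall_mem_zpowers hg, Nat.card_eq_fintype_card]
  obtain ⟨c, hc⟩ := hd
  have hc0 : c ≠ 0 := by
    rintro rfl
    rw [mul_zero] at hc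
    exact Fintype.card_ne_zero hc
  refine ⟨zpowers (g ^ c), ?_⟩
  rw [Nat.card_zpowers, orderOf_pow, hog, hc,
    Nat.gcd_eq_right ⟨d, by ring⟩, Nat.mul_div_cancel d (Nat.pos_of_ne_zero hc0)]

/-- In a finite cyclic group G, any subgroup K maximal with respect to not
containing a (a ≠ 1) has index p^(α−β+1) for some prime p dividing ord(a),
where p^α ∥ |G| and p^β ∥ ord(a). -/
theorem stmt_8 {G : Type*} [Group G] [Fintype G] [IsCyclic G]
    (a : G) (ha : a ≠ 1) (K : Subgroup G) (haK : a ∉ K)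
    (hmax : ∀ K' : Subgroup G, K < K' → a ∈ K') :
    ∃ p : ℕ, p.Prime ∧ p ∣ orderOf a ∧
      K.index = p ^ ((Fintype.card G).factorization p - (orderOf a).factorization p + 1) := by
  classical
  set n := Fintype.card G with hn
  set k := Nat.card K with hk
  set d := K.index with hd
  set e := orderOf a with he
  have hnk : d * k = n := by
    rw [hd, hk, hn, ← Nat.card_eq_fintype_card]; exact Subgroup.index_mul_card K
  have hk0 : k ≠ 0 := Nat.card_pos.ne'
  have hn0 : n ≠ 0 := Fintype.card_ne_zero
  have he0 : e ≠ 0 := (orderOf_pos a).ne'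
  have hd0 : d ≠ 0 := by
    intro h; rw [h] at hnk; simp at hnk; exact hn0 hnk.symm
  -- e does not divide k
  have hek : ¬ e ∣ k := by
    intro h
    exact haK ((mem_iff_pow_card_eq_one K a).2 (orderOf_dvd_iff_pow_eq_one.1 h))
  -- for every prime p dividing d, e ∣ k * p
  have key : ∀ p : ℕ, p.Prime → p ∣ d → e ∣ k * p := by
    intro p hp hpd
    have hdvd : k * p ∣ n := by
      obtain ⟨c, hc⟩ := hpd
      exact ⟨c, by rw [← hnk, hc]; ring⟩
    obtain ⟨K', hK'⟩ := exists_subgroup_card_eq hdvd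
      (mul_ne_zero hk0 hp.pos.ne')
    have hle : K ≤ K' := by
      intro x hx
      rw [mem_iff_pow_card_eq_one, hK', pow_mul]
      rw [mem_iff_pow_card_eq_one K, ← hk] at hx
      rw [hx, one_pow]
    have hlt : K < K' := by
      refine lt_of_le_of_ne hle ?_
      intro hEq
      rw [← hEq, ← hk] at hK'
      nlinarith [hp.two_le, Nat.pos_of_ne_zero hk0]
    have := hmax K' hlt
    rw [mem_iff_pow_card_eq_one, hK'] at this
    exact orderOf_dvd_iff_pow_eq_one.2 this
  have hd1 : d ≠ 1 := by
    intro h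
    exact haK ((Subgroup.index_eq_one.1 h) ▸ Subgroup.mem_top a)
  set p := d.minFac with hp
  have hpp : p.Prime := Nat.minFac_prime hd1
  have hpd : p ∣ d := Nat.minFac_dvd d
  -- every prime dividing d equals p
  have huniq : ∀ {q : ℕ}, q.Prime → q ∣ d → q = p := by
    intro q hq hqd
    by_contra hne
    have h1 : e ∣ k * p := key p hpp hpd
    have h2 : e ∣ k * q := key q hq hqd
    have : e ∣ Nat.gcd (k * p) (k * q) := Nat.dvd_gcd h1 h2
    rw [Nat.gcd_mul_left, (Nat.coprime_primes hpp hq).2 (Ne.symm hne)] at this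
    simp at this
    exact hek this
  obtain ⟨m, hm⟩ : ∃ m, d = p ^ m :=
    ⟨_, Nat.eq_prime_pow_of_unique_prime_dvd hd0 huniq⟩
  have hm0 : m ≠ 0 := by
    rintro rfl; simp at hm; exact hd1 hm
  have hekp : e ∣ k * p := key p hpp hpd
  -- p divides e
  have hpe : p ∣ e := by
    by_contra hpe
    have : Nat.Coprime e p := ((Nat.Prime.coprime_iff_not_dvd hpp).2 hpe).symm
    exact hek (this.dvd_of_dvd_mul_right hekp)
  -- v_p(e) = v_p(k) + 1
  have hβ : e.factorization p = k.factorization p + 1 := by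
    have hle : e.factorization p ≤ k.factorization p + 1 := by
      have := (Nat.factorization_le_iff_dvd he0 (mul_ne_zero hk0 hpp.pos.ne')).2 hekp
      have h2 := this p
      rwa [Nat.factorization_mul hk0 hpp.pos.ne', Finsupp.add_apply,
        Nat.Prime.factorization_self hpp] at h2
    have hne : e.factorization p ≠ k.factorization p + 1 → e ∣ k := by
      intro hne
      rw [← Nat.factorization_le_iff_dvd he0 hk0]
      intro q
      have hq := (Nat.factorization_le_iff_dvd he0 (mul_ne_zero hk0 hpp.pos.ne')).2 hekp q
      rw [Nat.factorization_mul hk0 hpp.pos.ne', Finsupp.add_apply] at hq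
      rcases eq_or_ne q p with rfl | hqp
      · omega
      · rwa [Nat.Prime.factorization hpp, Finsupp.single_apply, if_neg (Ne.symm hqp), add_zero] at hq
    by_contra h
    exact hek (hne (by omega))
  -- compute the exponent
  have hα : n.factorization p = m + k.factorization p := by
    rw [← hnk, Nat.factorization_mul hd0 hk0, Finsupp.add_apply, hm,
      Nat.Prime.factorization_pow hpp, Finsupp.single_apply, if_pos rfl]
  refine ⟨p, hpp, hpe, ?_⟩
  have : n.factorization p - e.factorization p + 1 = m := by omega
  rw [this]
  exact hm
end

section
/- Let q be a prime, G = (Z/qZ)*, a ≠ 1 in G, 𝒫 = 𝒫(G,a) = [G : H(a)]. Let 𝔐 be a multiset in G with no sub-multiset product equal to a, and suppose the subgroup H generated by the high-multiplicity (≥ q−2) elements equals H(a). Then the multiset 𝔎 of elements of 𝔐 not in H(a) satisfies |𝔎| ≤ 𝒫 − 2. -/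
/-!
Pass to `Q = G ⧸ H(a)`. By maximality of `H(a)`, the preimage of a nontrivial cyclic
subgroup of `Q` contains `a`, so the image `ā` of `a` lies in every nontrivial cyclic subgroup
of `Q`. Appending a nontrivial element `x` to a multiset either enlarges its set of
subproducts, or leaves that set stable under multiplication by `x`, in which case it contains
`⟨x⟩ ∋ ā`. Hence any `|Q| - 1` nontrivial elements of `Q` have a subproduct equal to `ā`;
lifting, `|𝔎| ≥ 𝒫 - 1` would give `S ≤ 𝔎` with `a ∈ S.prod * H(a)`. Every generator `y` of
`H(a)` occurs at least `q - 2 ≥ ord y - 1` times in `𝔐`, so every element of `H(a)` is a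
subproduct of the part of `𝔐` inside `H(a)`, and this completes `S` to a subproduct of `𝔐`
equal to `a`.
-/

open Subgroup
open scoped Pointwise

namespace Multiset

theorem exists_le_map_eq_of_le_map {α β : Type*} {f : α → β} {s : Multiset β}
    {t : Multiset α} (h : s ≤ t.map f) : ∃ u ≤ t, u.map f = s := by
  classical
  induction t using Multiset.induction_on generalizing s with
  | empty => exact ⟨0, le_rfl, by simp_all⟩
  | cons a t ih =>
    rw [map_cons] at h
    by_cases ha : f a ∈ s
    · obtain ⟨u, hu, hmap⟩ := ih (erase_le_iff_le_cons.mpr h)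
      exact ⟨a ::ₘ u, cons_le_cons _ hu, by rw [map_cons, hmap, cons_erase ha]⟩
    · obtain ⟨u, hu, rfl⟩ := ih ((le_cons_of_notMem ha).mp h)
      exact ⟨u, hu.trans (le_cons_self _ _), rfl⟩

section CommMonoid

variable {G : Type*} [CommMonoid G]

def subprods (T : Multiset G) : Set G := {g | ∃ S ≤ T, S.prod = g}

theorem one_mem_subprods (T : Multiset G) : 1 ∈ subprods T := ⟨0, zero_le _, prod_zero⟩

theorem subprods_mono {S T : Multiset G} (h : S ≤ T) : subprods S ⊆ subprods T :=
  fun _ ⟨U, hU, hprod⟩ ↦ ⟨U, hU.trans h, hprod⟩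

theorem mul_subset_subprods_add (S T : Multiset G) :
    subprods S * subprods T ⊆ subprods (S + T) := by
  rintro _ ⟨_, ⟨U, hU, rfl⟩, _, ⟨V, hV, rfl⟩, rfl⟩
  exact ⟨U + V, add_le_add hU hV, prod_add U V⟩

theorem subprods_map {H F : Type*} [CommMonoid H] [FunLike F G H] [MonoidHomClass F G H]
    (f : F) (T : Multiset G) : subprods (T.map f) = f '' subprods T := by
  ext h
  constructor
  · rintro ⟨S, hS, rfl⟩
    obtain ⟨U, hU, rfl⟩ := exists_le_map_eq_of_le_map hS
    exact ⟨U.prod, ⟨U, hU, rfl⟩, map_multiset_prod f U⟩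
  · rintro ⟨_, ⟨U, hU, rfl⟩, rfl⟩
    exact ⟨U.map f, map_le_map hU, (map_multiset_prod f U).symm⟩

end CommMonoid

section CommGroup

variable {G : Type*} [CommGroup G]

theorem zpowers_subset_subprods_replicate {y : G} (hy : IsOfFinOrder y) :
    (zpowers y : Set G) ⊆ subprods (replicate (orderOf y - 1) y) := by
  classical
  intro g hg
  obtain ⟨n, hn, rfl⟩ := Finset.mem_image.mp (hy.mem_zpowers_iff_mem_range_orderOf.mp hg)
  rw [Finset.mem_range] at hn
  exact ⟨replicate n y, (replicate_le_replicate y).mpr (by omega), prod_replicate n y⟩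

theorem closure_subset_subprods_sum_replicate [Finite G] [DecidableEq G] (Y : Finset G) :
    (closure (Y : Set G) : Set G) ⊆ subprods (∑ y ∈ Y, replicate (orderOf y - 1) y) := by
  induction Y using Finset.induction_on with
  | empty => simp [one_mem_subprods]
  | insert y Y hy ih =>
    rw [Finset.sum_insert hy, Finset.coe_insert, Set.insert_eq, Subgroup.closure_union,
      ← zpowers_eq_closure, mul_normal]
    have hzpow := zpowers_subset_subprods_replicate (isOfFinOrder_of_finite y)
    exact (Set.mul_subset_mul hzpow ih).trans (mul_subset_subprods_add _ _)

theorem closure_subset_subprods [Finite G] [DecidableEq G] (F : Multiset G) :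
    (closure {y | orderOf y ≤ F.count y + 1} : Set G) ⊆ subprods F := by
  set Y := (Set.toFinite {y : G | orderOf y ≤ F.count y + 1}).toFinset
  have hle : ∑ y ∈ Y, replicate (orderOf y - 1) y ≤ F := by
    refine le_iff_count.mpr fun x ↦ ?_
    simp only [count_sum', count_replicate, Finset.sum_ite_eq']
    split_ifs with hx
    · simp only [Y, Set.Finite.mem_toFinset] at hx
      exact Nat.sub_le_iff_le_add.mpr hx
    · exact Nat.zero_le _
  have hclosure := closure_subset_subprods_sum_replicate Y
  rw [Set.Finite.coe_toFinset] at hclosure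
  exact hclosure.trans (subprods_mono hle)

theorem card_add_one_le_ncard_subprods [Finite G] {t : G}
    (ht : ∀ x : G, x ≠ 1 → t ∈ zpowers x) (T : Multiset G) (hT : ∀ x ∈ T, x ≠ 1)
    (htT : t ∉ subprods T) : card T + 1 ≤ (subprods T).ncard := by
  induction T using Multiset.induction_on with
  | empty => exact (Set.ncard_pos (Set.toFinite _)).mpr ⟨1, one_mem_subprods 0⟩
  | cons x T ih =>
    have hsub : subprods T ⊆ subprods (x ::ₘ T) := subprods_mono (le_cons_self T x)
    have hcard := ih (fun y hy ↦ hT y (mem_cons_of_mem hy)) (fun h ↦ htT (hsub h))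
    obtain ⟨s, hs, hxs⟩ : ∃ s ∈ subprods T, x * s ∉ subprods T := by
      by_contra! hstable
      have hpow (n : ℕ) : x ^ n ∈ subprods T := by
        induction n with
        | zero => simpa using one_mem_subprods T
        | succ n ihn => rw [pow_succ']; exact hstable _ ihn
      obtain ⟨n, rfl⟩ := mem_powers_iff_mem_zpowers.mpr (ht x (hT x (mem_cons_self x T)))
      exact htT (hsub (hpow n))
    have hxs' : x * s ∈ subprods (x ::ₘ T) := by
      obtain ⟨S, hS, rfl⟩ := hs
      exact ⟨x ::ₘ S, cons_le_cons x hS, prod_cons x S⟩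
    calc card (x ::ₘ T) + 1 = card T + 1 + 1 := by rw [card_cons]
      _ ≤ (subprods T).ncard + 1 := by omega
      _ = (insert (x * s) (subprods T)).ncard := (Set.ncard_insert_of_notMem hxs).symm
      _ ≤ (subprods (x ::ₘ T)).ncard := Set.ncard_le_ncard (Set.insert_subset hxs' hsub)

theorem mem_subprods_of_card_le [Finite G] {t : G} (ht : ∀ x : G, x ≠ 1 → t ∈ zpowers x)
    {T : Multiset G} (hT : ∀ x ∈ T, x ≠ 1) (hcard : Nat.card G ≤ card T + 1) :
    t ∈ subprods T := by
  by_contra htT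
  have hne : subprods T ≠ Set.univ := fun h ↦ htT (h ▸ Set.mem_univ t)
  have hlower := card_add_one_le_ncard_subprods ht T hT htT
  have hupper := Set.ncard_lt_card hne
  omega

end CommGroup

end Multiset

theorem QuotientGroup.mk_mem_zpowers_of_forall_card_le {G : Type*} [CommGroup G] [Finite G]
    {H : Subgroup G} {a : G} (hmax : ∀ K : Subgroup G, a ∉ K → Nat.card K ≤ Nat.card H)
    {x : G ⧸ H} (hx : x ≠ 1) : (a : G ⧸ H) ∈ zpowers x := by
  obtain ⟨g, rfl⟩ := QuotientGroup.mk_surjective x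
  set K := (zpowers (g : G ⧸ H)).comap (QuotientGroup.mk' H)
  have hgK : g ∈ K := mem_zpowers (g : G ⧸ H)
  by_contra haK
  have hHK : H = K :=
    eq_of_le_of_card_ge (QuotientGroup.ker_mk' H ▸ MonoidHom.ker_le_comap _ _) (hmax K haK)
  exact hx ((QuotientGroup.eq_one_iff g).mpr (hHK ▸ hgK))

open scoped Classical

open Multiset

theorem stmt_12_general (q : ℕ) (hq : q.Prime) (a : (ZMod q)ˣ)
    (M : Multiset (ZMod q)ˣ) (havoid : ∀ S ≤ M, S.prod ≠ a)
    (Ha : Subgroup (ZMod q)ˣ)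
    (hmax : ∀ K : Subgroup (ZMod q)ˣ, a ∉ K → Nat.card K ≤ Nat.card Ha)
    (hH : Subgroup.closure {y : (ZMod q)ˣ | q - 2 ≤ M.count y} = Ha) :
    (M.filter (fun x => x ∉ Ha)).card ≤ Ha.index - 2 := by
  have : Fact q.Prime := ⟨hq⟩
  by_contra! hcard
  have hquot :
      (a : (ZMod q)ˣ ⧸ Ha) ∈ subprods ((M.filter (· ∉ Ha)).map (QuotientGroup.mk' Ha)) := by
    refine mem_subprods_of_card_le
      (fun _ ↦ QuotientGroup.mk_mem_zpowers_of_forall_card_le hmax) ?_ ?_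
    · simp only [Multiset.mem_map, mem_filter]
      rintro _ ⟨x, ⟨-, hx⟩, rfl⟩
      exact fun h ↦ hx ((QuotientGroup.eq_one_iff x).mp h)
    · rw [card_map, ← Subgroup.index_eq_card]
      omega
  rw [subprods_map] at hquot
  obtain ⟨_, ⟨S, hS, rfl⟩, hSa⟩ := hquot
  have hHa : Ha ≤ Subgroup.closure {y | orderOf y ≤ (M.filter (· ∈ Ha)).count y + 1} := by
    refine hH.ge.trans (Subgroup.closure_mono fun y hy ↦ ?_)
    have hy : q - 2 ≤ M.count y := hy
    have hord : orderOf y ≤ q - 1 := ZMod.card_units q ▸ orderOf_le_card_univ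
    show orderOf y ≤ (M.filter (· ∈ Ha)).count y + 1
    rw [count_filter_of_pos (hH.le (Subgroup.subset_closure hy))]
    omega
  obtain ⟨R, hR, hRprod⟩ := closure_subset_subprods _ (hHa (QuotientGroup.eq.mp hSa))
  refine havoid (S + R) ?_ (by rw [prod_add, hRprod, mul_inv_cancel_left])
  calc S + R ≤ M.filter (· ∉ Ha) + M.filter (· ∈ Ha) := add_le_add hS hR
    _ = M := by simpa using filter_add_not (· ∉ Ha) M

/-- If the subgroup generated by the high-multiplicity (≥ q−2) elements of a
product-avoiding multiset 𝔐 equals H(a), then the multiset 𝔎 of elements of 𝔐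
outside H(a) has cardinality at most 𝒫 − 2, where 𝒫 = [G : H(a)]. -/
theorem stmt_12 (q : ℕ) (hq : q.Prime) (a : (ZMod q)ˣ) (ha : a ≠ 1)
    (M : Multiset (ZMod q)ˣ) (havoid : ∀ S ≤ M, S.prod ≠ a)
    (Ha : Subgroup (ZMod q)ˣ) (haHa : a ∉ Ha)
    (hmax : ∀ K : Subgroup (ZMod q)ˣ, a ∉ K → Nat.card K ≤ Nat.card Ha)
    (hH : Subgroup.closure {y : (ZMod q)ˣ | q - 2 ≤ M.count y} = Ha) :
    (M.filter (fun x => x ∉ Ha)).card ≤ Ha.index - 2 :=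
  stmt_12_general q hq a M havoid Ha hmax hH
end

section
/- Let p be an odd prime and r ≥ 1. The number of distinct multisets 𝔐_{p,r,a}(b) in Z/p^rZ with a = p^{r−1}, as b ranges over units modulo p^r, is exactly p^{r−1}·(p−1)/2; for p = 2 and r ≥ 2 it is 2^{r−2}. -/
/-! Replacing `b` by `-b` sends `n(b) = (a b⁻¹ - 1).val` to `(-(a b⁻¹ - 1) - 2).val`, which is
`p ^ r - 2 - n(b)` because `a ≠ 0` keeps `a b⁻¹ - 1` away from `-1`; so the two multiplicities
swap and the multiset is unchanged. Conversely the multiset is nonempty and contains only `±b`,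
so it determines `b` up to sign. Hence the multisets correspond to the `φ(p ^ r) / 2` pairs
`{b, -b}` of units, and `φ(p ^ r) = p ^ (r - 1) * (p - 1)`. -/

open Finset in
theorem ncard_range_mul_two_of_fiber_pair {α β : Type*} [Fintype α] (f : α → β) (σ : α → α)
    (hσ : ∀ x, σ x ≠ x) (hf : ∀ x y, f y = f x ↔ y = x ∨ y = σ x) :
    (Set.range f).ncard * 2 = Nat.card α := by
  classical
  have hfiber : ∀ M ∈ univ.image f, #{x | f x = M} = 2 := by
    simp only [mem_image, mem_univ, true_and, forall_exists_index, forall_apply_eq_imp_iff]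
    intro x
    have : ({y | f y = f x} : Finset α) = {σ x, x} := by ext y; simp [hf, or_comm]
    rw [this, card_pair (hσ x)]
  rw [← Set.image_univ, ← coe_univ, ← coe_image, Set.ncard_coe_finset, Nat.card_eq_fintype_card,
    ← card_univ, card_eq_sum_card_image f univ, sum_congr rfl hfiber, sum_const, smul_eq_mul]

namespace ZMod

theorem val_add_two_le {n : ℕ} [NeZero n] {x : ZMod n} (hx : x ≠ -1) : x.val + 2 ≤ n := by
  have hlt := x.val_lt
  by_contra! h
  apply hx
  rw [← natCast_zmod_val x, show x.val = (n - 1 : ℕ) by omega, Nat.cast_sub (by omega)]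
  simp

theorem val_neg_sub_two {n : ℕ} [NeZero n] {x : ZMod n} (hx : x ≠ -1) :
    (-x - 2).val = n - 2 - x.val := by
  have hle := val_add_two_le hx
  rw [← val_cast_of_lt (show n - 2 - x.val < n by omega)]
  congr 1
  rw [Nat.cast_sub (by omega), Nat.cast_sub (by omega), natCast_self, natCast_zmod_val]
  ring

theorem neg_unit_ne_self {n : ℕ} (hn : 2 < n) (b : (ZMod n)ˣ) : -b ≠ b := by
  intro h
  have h2 : ((2 : ℕ) : ZMod n) = 0 := by
    have hb : (b : ZMod n) + b = 0 := by
      rw [← neg_eq_iff_add_eq_zero, ← Units.val_neg, h]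
    have := congrArg (· * (↑b⁻¹ : ZMod n)) hb
    simp only [add_mul, Units.mul_inv, zero_mul] at this
    exact_mod_cast this
  have := Nat.le_of_dvd two_pos ((natCast_eq_zero_iff 2 n).mp h2)
  omega

/-- The paper's `𝔐_{p,r,a}(b)`, with `n = p ^ r`. -/
def unitMultiset {n : ℕ} (a : ZMod n) (b : (ZMod n)ˣ) : Multiset (ZMod n) :=
  Multiset.replicate (a * ↑b⁻¹ - 1).val (b : ZMod n) +
    Multiset.replicate (n - 2 - (a * ↑b⁻¹ - 1).val) (-(b : ZMod n))

variable {n : ℕ} {a : ZMod n}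

theorem mul_inv_sub_one_ne_neg_one (ha : a ≠ 0) (b : (ZMod n)ˣ) : a * ↑b⁻¹ - 1 ≠ -1 := by
  simpa [sub_eq_neg_self] using ha

theorem unitMultiset_neg [NeZero n] (ha : a ≠ 0) (b : (ZMod n)ˣ) :
    unitMultiset a (-b) = unitMultiset a b := by
  have hne := mul_inv_sub_one_ne_neg_one ha b
  have hle := val_add_two_le hne
  have hval : (a * ↑(-b)⁻¹ - 1).val = n - 2 - (a * ↑b⁻¹ - 1).val := by
    rw [← val_neg_sub_two hne, inv_neg, Units.val_neg]
    ring_nf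
  rw [unitMultiset, unitMultiset, hval, show n - 2 - (n - 2 - (a * ↑b⁻¹ - 1).val) =
    (a * ↑b⁻¹ - 1).val by omega, Units.val_neg, neg_neg, add_comm]

theorem card_unitMultiset [NeZero n] (ha : a ≠ 0) (b : (ZMod n)ˣ) :
    Multiset.card (unitMultiset a b) = n - 2 := by
  have := val_add_two_le (mul_inv_sub_one_ne_neg_one ha b)
  simp only [unitMultiset, Multiset.card_add, Multiset.card_replicate]
  omega

theorem eq_or_eq_neg_of_mem_unitMultiset {b : (ZMod n)ˣ} {x : ZMod n}
    (hx : x ∈ unitMultiset a b) : x = b ∨ x = -b := by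
  rcases Multiset.mem_add.mp hx with h | h
  · exact .inl (Multiset.eq_of_mem_replicate h)
  · exact .inr (Multiset.eq_of_mem_replicate h)

theorem unitMultiset_eq_iff [NeZero n] (hn : 2 < n) (ha : a ≠ 0) (b b' : (ZMod n)ˣ) :
    unitMultiset a b' = unitMultiset a b ↔ b' = b ∨ b' = -b := by
  refine ⟨fun h => ?_, ?_⟩
  · obtain ⟨x, hx⟩ : ∃ x, x ∈ unitMultiset a b' :=
      Multiset.card_pos_iff_exists_mem.mp (by rw [card_unitMultiset ha]; omega)
    have hx' : x ∈ unitMultiset a b := h ▸ hx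
    rcases eq_or_eq_neg_of_mem_unitMultiset hx with rfl | rfl <;>
      rcases eq_or_eq_neg_of_mem_unitMultiset hx' with h' | h'
    all_goals simp only [Units.ext_iff, Units.val_neg]; grind
  · rintro (rfl | rfl)
    · rfl
    · exact unitMultiset_neg ha b

theorem ncard_unitMultisets [NeZero n] (hn : 2 < n) (ha : a ≠ 0) :
    {M | ∃ b, M = unitMultiset a b}.ncard = n.totient / 2 := by
  have h := ncard_range_mul_two_of_fiber_pair (unitMultiset a) Neg.neg
    (neg_unit_ne_self hn) (unitMultiset_eq_iff hn ha)
  rw [Nat.card_eq_fintype_card, card_units_eq_totient] at h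
  have hset : {M | ∃ b, M = unitMultiset a b} = Set.range (unitMultiset a) := by
    ext; simp [eq_comm]
  rw [hset]
  omega

theorem natCast_pow_pred_ne_zero {p r : ℕ} (hp : 1 < p) (hr : 1 ≤ r) :
    (p : ZMod (p ^ r)) ^ (r - 1) ≠ 0 := by
  rw [← Nat.cast_pow, Ne, natCast_eq_zero_iff, Nat.pow_dvd_pow_iff_le_right hp]
  omega

end ZMod

/-- The number of distinct multisets 𝔐_{p,r,a}(b) (a = p^(r−1)), as b ranges over
units mod p^r, is p^(r−1)(p−1)/2 for odd p, and 2^(r−2) for p = 2, r ≥ 2. -/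
theorem stmt_14 (p : ℕ) (hp : p.Prime) (r : ℕ) (hr : 1 ≤ r) :
    (Odd p →
      {M : Multiset (ZMod (p ^ r)) | ∃ b : (ZMod (p ^ r))ˣ,
          M = Multiset.replicate
                (((p : ZMod (p ^ r)) ^ (r - 1) * (↑b⁻¹ : ZMod (p ^ r)) - 1).val)
                (b : ZMod (p ^ r)) +
              Multiset.replicate
                (p ^ r - 2 -
                  ((p : ZMod (p ^ r)) ^ (r - 1) * (↑b⁻¹ : ZMod (p ^ r)) - 1).val)
                (-(b : ZMod (p ^ r)))}.ncard = p ^ (r - 1) * (p - 1) / 2) ∧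
    (p = 2 → 2 ≤ r →
      {M : Multiset (ZMod (p ^ r)) | ∃ b : (ZMod (p ^ r))ˣ,
          M = Multiset.replicate
                (((p : ZMod (p ^ r)) ^ (r - 1) * (↑b⁻¹ : ZMod (p ^ r)) - 1).val)
                (b : ZMod (p ^ r)) +
              Multiset.replicate
                (p ^ r - 2 -
                  ((p : ZMod (p ^ r)) ^ (r - 1) * (↑b⁻¹ : ZMod (p ^ r)) - 1).val)
                (-(b : ZMod (p ^ r)))}.ncard = 2 ^ (r - 2)) := by
  have : NeZero (p ^ r) := NeZero.of_pos (pow_pos hp.pos r)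
  have hcount (hn : 2 < p ^ r) :
      {M | ∃ b, M = ZMod.unitMultiset ((p : ZMod (p ^ r)) ^ (r - 1)) b}.ncard
        = p ^ (r - 1) * (p - 1) / 2 := by
    rw [ZMod.ncard_unitMultisets hn (ZMod.natCast_pow_pred_ne_zero hp.one_lt hr),
      Nat.totient_prime_pow hp hr]
  refine ⟨fun hodd => hcount ?_, fun hp2 hr2 => (hcount ?_).trans ?_⟩
  · have hp3 : 3 ≤ p := by
      obtain ⟨k, rfl⟩ := hodd
      have := hp.two_le
      omega
    exact hp3.trans (Nat.le_self_pow (by omega) p)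
  · subst hp2
    exact (Nat.pow_le_pow_right two_pos hr2).trans_lt' (by norm_num)
  · subst hp2
    rw [show r - 1 = r - 2 + 1 by omega, pow_succ]
    omega
end
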